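/- arXiv:1901.10221 — 3 statements merged into one kernel-verified Lean document; each statement's English description precedes it below -/
import Mathlib

section
/- Let p be a prime, n ≥ 1, and let Pol¹,…,Pol^m ∈ (Z_p ∪ {⋆})^n be policies with associated coefficient vectors (viewing each as the linear equation Σ_i Pol_i·x_i − Σ_{i:Pol_i≠⋆} Pol_i = 0, where ⋆ contributes 0). Suppose there exists a row admissible with respect to a compatible set of positive constraints Pol¹,…,Pol^a and negative constraints Pol^{a+1},…,Pol^m. Then the solution set of the positive linear system is a nonempty affine subspace of Z_p^n, and the set of its elements that additionally violate each negative constraint equation is nonempty. -/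
/-- A policy (a vector over `ZMod p ∪ {⋆}`, with `none` as the don't care
symbol `⋆`) matches a row if every non-⋆ component equals the corresponding
row component. -/
def PolMatches {p n : ℕ} (Pol : Fin n → Option (ZMod p)) (Row : Fin n → ZMod p) : Prop :=
  ∀ i, Pol i = none ∨ Pol i = some (Row i)

/-- if there is a row admissible for the compatible set of
positive constraints `Pol 0, …, Pol (a-1)` and negative constraints
`Pol a, …, Pol (m-1)`, then the solution set of the positive system is a
nonempty affine subspace of `(ZMod p)ⁿ`, and the subset of it whose elements
additionally violate each negative constraint is nonempty. -/
theorem constraints_compatible_nonempty (p n m a : ℕ) [Fact p.Prime] (hn : 1 ≤ n)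
    (ha : a ≤ m) (Pol : Fin m → Fin n → Option (ZMod p))
    (hcompat : ∃ Row : Fin n → ZMod p,
      (∀ j : Fin m, (j : ℕ) < a → PolMatches (Pol j) Row) ∧
      (∀ j : Fin m, a ≤ (j : ℕ) → ¬ PolMatches (Pol j) Row)) :
    (∃ A : AffineSubspace (ZMod p) (Fin n → ZMod p),
        (A : Set (Fin n → ZMod p)) =
          {Row | ∀ j : Fin m, (j : ℕ) < a → PolMatches (Pol j) Row}) ∧
    {Row : Fin n → ZMod p | ∀ j : Fin m, (j : ℕ) < a → PolMatches (Pol j) Row}.Nonempty ∧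
    {Row : Fin n → ZMod p |
        (∀ j : Fin m, (j : ℕ) < a → PolMatches (Pol j) Row) ∧
        (∀ j : Fin m, a ≤ (j : ℕ) → ¬ PolMatches (Pol j) Row)}.Nonempty := by
  obtain ⟨R0, hpos, hneg⟩ := hcompat
  refine ⟨?_, ⟨R0, hpos⟩, ⟨R0, hpos, hneg⟩⟩
  set W : Submodule (ZMod p) (Fin n → ZMod p) :=
    { carrier := {v | ∀ i : Fin n, (∃ j : Fin m, (j : ℕ) < a ∧ Pol j i ≠ none) → v i = 0}
      add_mem' := fun hx hy i hi => by simp [hx i hi, hy i hi]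
      zero_mem' := fun i _ => rfl
      smul_mem' := fun c x hx i hi => by simp [hx i hi] } with hW
  refine ⟨AffineSubspace.mk' R0 W, ?_⟩
  ext Row
  rw [AffineSubspace.mem_coe, AffineSubspace.mem_mk']
  constructor
  · intro h j hj i
    cases hc : Pol j i with
    | none => exact Or.inl rfl
    | some c =>
      right
      have h0 : (Row -ᵥ R0) i = 0 := h i ⟨j, hj, by simp [hc]⟩
      have : Row i = R0 i := by
        have : Row i - R0 i = 0 := h0
        linear_combination this
      rw [this]
      rcases hpos j hj i with h' | h' <;> rw [hc] at h' <;> simp_all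
  · intro h i hi
    obtain ⟨j, hj, hne⟩ := hi
    rcases h j hj i with h1 | h1
    · exact absurd h1 hne
    rcases hpos j hj i with h2 | h2
    · exact absurd h2 hne
    have : Row i = R0 i := by
      have := h1.symm.trans h2
      exact Option.some_injective _ this
    show Row i - R0 i = 0
    rw [this]; ring
end

section
/- Let p be prime and let the AOE m-token decryption equation hold symbolically: in groups G, G_T of order p with bilinear map e, given the correctness computation of Section 4.1, for attribute vector X (extended with y) and key vector S with ⟨X,S⟩ = 0, the product C₀ · e(A₀,F) · e(B₀,H) · ∏_{i=1}^{u+1}[e(D_{i,1},K_{i,1})·e(E_{i,1},L_{i,1})·e(D_{i,2},K_{i,2})·e(E_{i,2},L_{i,2})] equals 1 in G_T, where all components are defined by the ParGen/Enc/pKeyGen formulas with constraints α_b·θ_{i,b,j} − β_b·ω_{i,b,j} = ω for all i,b,j, C₀ = Λ^{−q₀}·1 with Λ = e(g,g₂), A₀ = g^{q₀}, B₀ = Ω^{l₀}, Ω = g^ω, F = g₂·∏ K_{i,1}^{−γ_{i,1}}L_{i,1}^{−δ_{i,1}}K_{i,2}^{−γ_{i,2}}L_{i,2}^{−δ_{i,2}},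 H = g^{Σ(r_{i,1}+r_{i,2})}, D_{i,b} = g^{l₀ω_{i,b} + q₀γ_{i,b} + z_b α_b x_i}, E_{i,b} = g^{l₀θ_{i,b} + q₀δ_{i,b} + z_b β_b x_i}, K_{i,b} = g^{−β_b r_{i,b} + λ_b θ_{i,b} s_i}, L_{i,b} = g^{α_b r_{i,b} − λ_b ω_{i,b} s_i}. -/
open Finset

/-- AOE P-token decryption correctness.  Groups of prime order
`p` are modelled via the exponentiation maps `gp a = g^a` and
`gtp a = e(g,g)^a`, with `e (g^a) (g^b) = e(g,g)^{a·b}`.  Under the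
constraints `α_b·θ_{i,b} − β_b·ω_{i,b} = ω` and orthogonality
`∑ i, x_i·s_i = 0`, the full decryption product
`C₀ · e(A₀,F) · e(B₀,H) · ∏_{i,b} e(D_{i,b},K_{i,b})·e(E_{i,b},L_{i,b})`
equals `1` in the target group. -/
theorem aoe_pdec_correct (p u : ℕ) [Fact p.Prime]
    (G GT : Type*) [CommGroup G] [CommGroup GT]
    (gp : ZMod p → G) (gtp : ZMod p → GT) (e : G → G → GT)
    (hgp : ∀ a b : ZMod p, gp (a + b) = gp a * gp b)
    (hgtp : ∀ a b : ZMod p, gtp (a + b) = gtp a * gtp b)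
    (he : ∀ a b : ZMod p, e (gp a) (gp b) = gtp (a * b))
    (αv βv z lam : Fin 2 → ZMod p)
    (θv ωv γv δv r : Fin (u + 1) → Fin 2 → ZMod p)
    (x s : Fin (u + 1) → ZMod p) (ω e2 l₀ q₀ : ZMod p)
    (hconstr : ∀ i b, αv b * θv i b - βv b * ωv i b = ω)
    (horth : ∑ i, x i * s i = 0) :
    -- component exponents
    (let kexp : Fin (u + 1) → Fin 2 → ZMod p := fun i b =>
        -(βv b * r i b) + lam b * θv i b * s i
     let lexp : Fin (u + 1) → Fin 2 → ZMod p := fun i b =>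
        αv b * r i b - lam b * ωv i b * s i
     let dexp : Fin (u + 1) → Fin 2 → ZMod p := fun i b =>
        l₀ * ωv i b + q₀ * γv i b + z b * αv b * x i
     let eexp : Fin (u + 1) → Fin 2 → ZMod p := fun i b =>
        l₀ * θv i b + q₀ * δv i b + z b * βv b * x i
     let Fexp : ZMod p :=
        e2 + ∑ i, ∑ b, (-(γv i b) * kexp i b + -(δv i b) * lexp i b)
     let Hexp : ZMod p := -(∑ i, ∑ b, r i b)
     gtp (-(e2 * q₀)) * e (gp q₀) (gp Fexp) * e (gp (ω * l₀)) (gp Hexp) *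
       ∏ i, ∏ b,
         (e (gp (dexp i b)) (gp (kexp i b)) *
          e (gp (eexp i b)) (gp (lexp i b))) = 1) := by
  intro kexp lexp dexp eexp Fexp Hexp
  -- gtp sends 0 to 1 and sums to products
  have h0 : gtp 0 = 1 := by
    have h := hgtp 0 0
    rw [add_zero] at h
    exact (mul_left_cancel (a := gtp 0) (by rw [mul_one, ← h])).symm
  have hprod : ∀ (n : ℕ) (f : Fin n → ZMod p),
      ∏ i, gtp (f i) = gtp (∑ i, f i) := by
    intro n
    induction n with
    | zero => intro f; simp [h0]
    | succ m ih =>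
        intro f
        rw [Fin.prod_univ_succ, Fin.sum_univ_succ, hgtp, ih]
  -- rewrite the big product as gtp of a double sum
  have hP : (∏ i, ∏ b,
        (e (gp (dexp i b)) (gp (kexp i b)) *
         e (gp (eexp i b)) (gp (lexp i b)))) =
      gtp (∑ i, ∑ b, (dexp i b * kexp i b + eexp i b * lexp i b)) := by
    rw [← hprod]
    refine Finset.prod_congr rfl fun i _ => ?_
    rw [← hprod]
    refine Finset.prod_congr rfl fun b _ => ?_
    rw [he, he, ← hgtp]
  rw [hP, he, he, ← hgtp, ← hgtp, ← hgtp]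
  rw [show (-(e2 * q₀) + q₀ * Fexp + ω * l₀ * Hexp +
      ∑ i, ∑ b, (dexp i b * kexp i b + eexp i b * lexp i b)) = 0 from ?_, h0]
  -- now the pure algebra
  have key : ∀ i b, dexp i b * kexp i b + eexp i b * lexp i b
      + q₀ * (-(γv i b) * kexp i b + -(δv i b) * lexp i b)
      + ω * l₀ * (-(r i b))
      = z b * lam b * ω * (x i * s i) := by
    intro i b
    simp only [kexp, lexp, dexp, eexp]
    linear_combination (l₀ * r i b + z b * lam b * x i * s i) * hconstr i b
  have final : ∑ i, ∑ b, (dexp i b * kexp i b + eexp i b * lexp i b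
      + q₀ * (-(γv i b) * kexp i b + -(δv i b) * lexp i b)
      + ω * l₀ * (-(r i b))) = 0 := by
    calc ∑ i, ∑ b, (dexp i b * kexp i b + eexp i b * lexp i b
        + q₀ * (-(γv i b) * kexp i b + -(δv i b) * lexp i b)
        + ω * l₀ * (-(r i b)))
        = ∑ i, ∑ b, (z b * lam b * ω) * (x i * s i) := by
          refine Finset.sum_congr rfl fun i _ => Finset.sum_congr rfl fun b _ => ?_
          rw [key i b]
      _ = ∑ i, (∑ b, z b * lam b * ω) * (x i * s i) := by
          refine Finset.sum_congr rfl fun i _ => ?_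
          rw [Finset.sum_mul]
      _ = (∑ b, z b * lam b * ω) * ∑ i, x i * s i := by
          rw [Finset.mul_sum]
      _ = 0 := by rw [horth, mul_zero]
  -- expand `final` into the separated sums
  simp only [Finset.sum_add_distrib, ← Finset.mul_sum, ← Finset.sum_neg_distrib] at final
  simp only [Fexp, Hexp, mul_add, Finset.sum_add_distrib, ← Finset.mul_sum,
    ← Finset.sum_neg_distrib]
  linear_combination final
end

section
/- In the AOE decryption equation with ⟨X,S⟩ = σ ≠ 0, the decryption product equals e(g,g)^{ω·(z₁λ₁+z₂λ₂)·σ}; consequently, if z₁, z₂ are fixed nonzero and λ₁, λ₂ are chosen independently uniformly at random from Z_p, the result is uniformly distributed in the cyclic group generated by e(g,g)^{ω·σ}, and in particular equals 1_{G_T} with probability 1/p when ω ≠ 0 and σ ≠ 0 and z₁λ₁ + z₂λ₂ is uniform in Z_p. -/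
/-!
Expanding every pairing by `e(g^a, g^b) = e(g,g)^{ab}` turns the decryption product into
`e(g,g)` raised to a polynomial exponent. For each `(i, b)` the `q₀` terms cancel, and the terms
in `l₀` and in `z_b λ_b x_i` each carry the factor `α_b θ_{i,b} − β_b ω_{i,b} = ω`; the `l₀` part
then cancels against the pairing `e(g^{ω l₀}, g^{−Σ r})`, leaving `ω (Σ_b z_b λ_b)(Σ_i x_i s_i)`.
When `ω, σ ≠ 0` and `a ↦ e(g,g)^a` is injective, the product is `1` exactly on the line
`z₀ λ₀ + z₁ λ₁ = 0`, which contains `p` of the `p²` points since `z₁ ≠ 0`.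
-/

open Finset

theorem map_zero_eq_one_of_map_add {A M : Type*} [AddMonoid A] [LeftCancelMonoid M]
    {f : A → M} (hf : ∀ a b, f (a + b) = f a * f b) : f 0 = 1 := by
  simpa using (hf 0 0).symm

theorem map_sum_eq_prod_of_map_add {ι A M : Type*} [AddCommMonoid A] [CancelCommMonoid M]
    {f : A → M} (hf : ∀ a b, f (a + b) = f a * f b) (s : Finset ι) (g : ι → A) :
    f (∑ i ∈ s, g i) = ∏ i ∈ s, f (g i) := by
  induction s using Finset.cons_induction with
  | empty => exact map_zero_eq_one_of_map_add hf
  | cons a s ha ih => rw [sum_cons, prod_cons, hf, ih]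

theorem card_filter_mul_add_mul_eq {F : Type*} [Field F] [Fintype F] [DecidableEq F]
    (z : Fin 2 → F) (hz : z 1 ≠ 0) (c : F) :
    #{lam : Fin 2 → F | z 0 * lam 0 + z 1 * lam 1 = c} = Fintype.card F := by
  refine card_nbij' (fun lam => lam 0) (fun a => ![a, (c - z 0 * a) / z 1])
    (fun _ _ => mem_univ _) (fun a _ => ?_) (fun lam hlam => ?_) (fun a _ => rfl)
  · simp only [coe_filter, mem_univ, true_and, Set.mem_ofPred_eq, Matrix.cons_val_zero,
      Matrix.cons_val_one, Matrix.cons_val_fin_one]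
    field_simp
    ring
  · simp only [coe_filter, mem_univ, true_and, Set.mem_ofPred_eq] at hlam
    ext j
    fin_cases j
    · rfl
    · simp only [Fin.mk_one, Matrix.cons_val_one, Matrix.cons_val_fin_one]
      field_simp
      linear_combination -hlam

section
variable {R : Type*} [CommRing R]

theorem aoe_term_exponent_eq (α β θ ω' γ δ ω r l₀ q₀ z x lam s : R)
    (h : α * θ - β * ω' = ω) :
    q₀ * (-γ * (-(β * r) + lam * θ * s) + -δ * (α * r - lam * ω' * s)) +
      ((l₀ * ω' + q₀ * γ + z * α * x) * (-(β * r) + lam * θ * s) +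
        (l₀ * θ + q₀ * δ + z * β * x) * (α * r - lam * ω' * s)) =
      ω * l₀ * r + ω * (z * lam) * (x * s) := by
  linear_combination (l₀ * r + z * lam * x * s) * h

theorem aoe_exponent_sum_eq {ι κ : Type*} [Fintype ι] [Fintype κ]
    {A B r : ι → κ → R} {z lam : κ → R} {x s : ι → R} {ω e2 l₀ q₀ : R}
    (h : ∀ i b, q₀ * A i b + B i b = ω * l₀ * r i b + ω * (z b * lam b) * (x i * s i)) :
    -(e2 * q₀) + q₀ * (e2 + ∑ i, ∑ b, A i b) + ω * l₀ * -(∑ i, ∑ b, r i b) +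
      ∑ i, ∑ b, B i b = ω * (∑ b, z b * lam b) * ∑ i, x i * s i := by
  have hsum := sum_congr rfl fun i (_ : i ∈ univ) => sum_congr rfl fun b (_ : b ∈ univ) => h i b
  simp only [sum_add_distrib, ← mul_sum] at hsum
  have hprod : ∑ i, ∑ b, ω * (z b * lam b) * (x i * s i) =
      ω * (∑ b, z b * lam b) * ∑ i, x i * s i := by
    simp only [mul_sum, sum_mul, mul_assoc]
  linear_combination hsum + hprod

theorem aoe_decProd_eq {ι κ G GT : Type*} [Fintype ι] [Fintype κ] [CancelCommMonoid GT]
    {gp : R → G} {gtp : R → GT} {e : G → G → GT}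
    (hgtp : ∀ a b, gtp (a + b) = gtp a * gtp b) (he : ∀ a b, e (gp a) (gp b) = gtp (a * b))
    {αv βv z : κ → R} {θv ωv γv δv r : ι → κ → R} {x s : ι → R} {ω e2 l₀ q₀ : R}
    (hconstr : ∀ i b, αv b * θv i b - βv b * ωv i b = ω) (lam : κ → R) :
    gtp (-(e2 * q₀)) *
        e (gp q₀)
          (gp (e2 + ∑ i, ∑ b,
            (-(γv i b) * (-(βv b * r i b) + lam b * θv i b * s i) +
             -(δv i b) * (αv b * r i b - lam b * ωv i b * s i)))) *
        e (gp (ω * l₀)) (gp (-(∑ i, ∑ b, r i b))) *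
        ∏ i, ∏ b,
          (e (gp (l₀ * ωv i b + q₀ * γv i b + z b * αv b * x i))
             (gp (-(βv b * r i b) + lam b * θv i b * s i)) *
           e (gp (l₀ * θv i b + q₀ * δv i b + z b * βv b * x i))
             (gp (αv b * r i b - lam b * ωv i b * s i))) =
      gtp (ω * (∑ b, z b * lam b) * ∑ i, x i * s i) := by
  simp only [he, ← hgtp, ← map_sum_eq_prod_of_map_add hgtp]
  exact congrArg gtp <| aoe_exponent_sum_eq fun i b =>
    aoe_term_exponent_eq _ _ _ _ _ _ _ _ _ _ _ _ _ _ (hconstr i b)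

end

theorem aoe_pdec_nonmatching_general (p u : ℕ) [Fact p.Prime]
    (G GT : Type*) [CommGroup GT] [DecidableEq GT]
    (gp : ZMod p → G) (gtp : ZMod p → GT) (e : G → G → GT)
    (hgtp : ∀ a b : ZMod p, gtp (a + b) = gtp a * gtp b)
    (he : ∀ a b : ZMod p, e (gp a) (gp b) = gtp (a * b))
    (αv βv z : Fin 2 → ZMod p)
    (θv ωv γv δv r : Fin (u + 1) → Fin 2 → ZMod p)
    (x s : Fin (u + 1) → ZMod p) (ω e2 l₀ q₀ σ : ZMod p)
    (hconstr : ∀ i b, αv b * θv i b - βv b * ωv i b = ω)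
    (hσ : ∑ i, x i * s i = σ) (hσ0 : σ ≠ 0) :
    (let DecProd : (Fin 2 → ZMod p) → GT := fun lam =>
        gtp (-(e2 * q₀)) *
        e (gp q₀)
          (gp (e2 + ∑ i, ∑ b,
            (-(γv i b) * (-(βv b * r i b) + lam b * θv i b * s i) +
             -(δv i b) * (αv b * r i b - lam b * ωv i b * s i)))) *
        e (gp (ω * l₀)) (gp (-(∑ i, ∑ b, r i b))) *
        ∏ i, ∏ b,
          (e (gp (l₀ * ωv i b + q₀ * γv i b + z b * αv b * x i))
             (gp (-(βv b * r i b) + lam b * θv i b * s i)) *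
           e (gp (l₀ * θv i b + q₀ * δv i b + z b * βv b * x i))
             (gp (αv b * r i b - lam b * ωv i b * s i)))
     (∀ lam : Fin 2 → ZMod p,
        DecProd lam = gtp (ω * (z 0 * lam 0 + z 1 * lam 1) * σ)) ∧
     (ω ≠ 0 → z 0 ≠ 0 → z 1 ≠ 0 → Function.Injective gtp →
        ((univ : Finset (Fin 2 → ZMod p)).filter
            (fun lam => DecProd lam = 1)).card * p
          = (univ : Finset (Fin 2 → ZMod p)).card)) := by
  intro DecProd
  have hDec : ∀ lam, DecProd lam = gtp (ω * (z 0 * lam 0 + z 1 * lam 1) * σ) := fun lam => by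
    rw [← Fin.sum_univ_two (fun b => z b * lam b), ← hσ]
    exact aoe_decProd_eq hgtp he hconstr lam
  refine ⟨hDec, fun hω _ hz1 hinj => ?_⟩
  have hfilter : ({lam | DecProd lam = 1} : Finset (Fin 2 → ZMod p)) =
      ({lam | z 0 * lam 0 + z 1 * lam 1 = 0} : Finset (Fin 2 → ZMod p)) :=
    filter_congr fun lam _ => by
      rw [hDec, ← map_zero_eq_one_of_map_add hgtp, hinj.eq_iff]
      simp [hω, hσ0]
  rw [hfilter, card_filter_mul_add_mul_eq z hz1 0]
  simp [ZMod.card, sq]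

/-- for a non-matching ciphertext with `⟨X,S⟩ = σ ≠ 0`, the AOE
decryption product equals `e(g,g)^{ω·(z₁λ₁+z₂λ₂)·σ}`; and if moreover
`ω ≠ 0`, `z₁, z₂ ≠ 0`, then over uniform independent `λ₁, λ₂` the product
equals `1` with probability exactly `1/p`. -/
theorem aoe_pdec_nonmatching (p u : ℕ) [Fact p.Prime]
    (G GT : Type*) [CommGroup G] [CommGroup GT] [DecidableEq GT]
    (gp : ZMod p → G) (gtp : ZMod p → GT) (e : G → G → GT)
    (hgp : ∀ a b : ZMod p, gp (a + b) = gp a * gp b)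
    (hgtp : ∀ a b : ZMod p, gtp (a + b) = gtp a * gtp b)
    (he : ∀ a b : ZMod p, e (gp a) (gp b) = gtp (a * b))
    (αv βv z : Fin 2 → ZMod p)
    (θv ωv γv δv r : Fin (u + 1) → Fin 2 → ZMod p)
    (x s : Fin (u + 1) → ZMod p) (ω e2 l₀ q₀ σ : ZMod p)
    (hconstr : ∀ i b, αv b * θv i b - βv b * ωv i b = ω)
    (hσ : ∑ i, x i * s i = σ) (hσ0 : σ ≠ 0) :
    (let DecProd : (Fin 2 → ZMod p) → GT := fun lam =>
        gtp (-(e2 * q₀)) *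
        e (gp q₀)
          (gp (e2 + ∑ i, ∑ b,
            (-(γv i b) * (-(βv b * r i b) + lam b * θv i b * s i) +
             -(δv i b) * (αv b * r i b - lam b * ωv i b * s i)))) *
        e (gp (ω * l₀)) (gp (-(∑ i, ∑ b, r i b))) *
        ∏ i, ∏ b,
          (e (gp (l₀ * ωv i b + q₀ * γv i b + z b * αv b * x i))
             (gp (-(βv b * r i b) + lam b * θv i b * s i)) *
           e (gp (l₀ * θv i b + q₀ * δv i b + z b * βv b * x i))
             (gp (αv b * r i b - lam b * ωv i b * s i)))
     (∀ lam : Fin 2 → ZMod p,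
        DecProd lam = gtp (ω * (z 0 * lam 0 + z 1 * lam 1) * σ)) ∧
     (ω ≠ 0 → z 0 ≠ 0 → z 1 ≠ 0 → Function.Injective gtp →
        ((univ : Finset (Fin 2 → ZMod p)).filter
            (fun lam => DecProd lam = 1)).card * p
          = (univ : Finset (Fin 2 → ZMod p)).card)) :=
  aoe_pdec_nonmatching_general p u G GT gp gtp e hgtp he αv βv z θv ωv γv δv r x s ω e2 l₀ q₀ σ
    hconstr hσ hσ0
end
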